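/- Assume the setup for induced semidirect product sequences: {G_i, λ_i} is an inverse sequence of groups, each φ_i is an automorphism of G_i, and φ_{i−1} ∘ λ_i = λ_i ∘ φ_i for all i ≥ 1. Then the induced semidirect product sequence {G_i ⋊_{φ_i} ⟨t_i⟩, λ̄_i} is semistable if and only if the base sequence {G_i, λ_i} is semistable. -/
import Mathlib




universe u

/-- The composite bonding homomorphism `λ_{i,j} : G_j →* G_i` of an inverse sequence of
groups, for `i ≤ j`. -/
def invSeqComp {G : ℕ → Type u} [∀ i, Group (G i)] (lam : ∀ i, G (i + 1) →* G i)
    {i j : ℕ} (h : i ≤ j) : G j →* G i :=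
  Nat.leRecOn h (fun {k} f => f.comp (lam k)) (MonoidHom.id (G i))

/-- An inverse sequence of groups is **pro-monomorphic** if there exists `i` such that for
every `j ≥ i` there exists `k₀ ≥ j` with `ker (λ_{i,k}) = ker (λ_{j,k})` for all `k ≥ k₀`. -/
def ProMono {G : ℕ → Type u} [∀ i, Group (G i)] (lam : ∀ i, G (i + 1) →* G i) : Prop :=
  ∃ i : ℕ, ∀ j : ℕ, ∀ hij : i ≤ j, ∃ k₀ : ℕ, ∃ hjk₀ : j ≤ k₀, ∀ k : ℕ, ∀ hk₀k : k₀ ≤ k,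
    (invSeqComp lam (hij.trans (hjk₀.trans hk₀k))).ker =
      (invSeqComp lam (hjk₀.trans hk₀k)).ker

/-- An inverse sequence of groups is **semistable** (Mittag-Leffler) if for every `i` there
exists `j ≥ i` such that `Im (λ_{i,k}) = Im (λ_{i,j})` for all `k ≥ j`. -/
def Semistable {G : ℕ → Type u} [∀ i, Group (G i)] (lam : ∀ i, G (i + 1) →* G i) : Prop :=
  ∀ i : ℕ, ∃ j : ℕ, ∃ hij : i ≤ j, ∀ k : ℕ, ∀ hjk : j ≤ k,
    (invSeqComp lam (hij.trans hjk)).range = (invSeqComp lam hij).range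

/-- An inverse sequence of groups is **stable** if it is pro-monomorphic and semistable. -/
def Stable {G : ℕ → Type u} [∀ i, Group (G i)] (lam : ∀ i, G (i + 1) →* G i) : Prop :=
  ProMono lam ∧ Semistable lam

/-- The semidirect product `G ⋊_φ ⟨t⟩` of a group `G` with an infinite cyclic group
`⟨t⟩ ≅ ℤ`, where conjugation by `t` acts on `G` as the automorphism `φ`. -/
abbrev ZSemidirect (G : Type u) [Group G] (φ : MulAut G) : Type u :=
  G ⋊[zpowersHom (MulAut G) φ] Multiplicative ℤ

/-- The stable generator `t` of the infinite cyclic factor of `G ⋊_φ ⟨t⟩`. -/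
def ZSemidirect.t (G : Type u) [Group G] (φ : MulAut G) : ZSemidirect G φ :=
  SemidirectProduct.inr (Multiplicative.ofAdd 1)

theorem invSeqComp_self' {G : ℕ → Type u} [∀ i, Group (G i)] (lam : ∀ i, G (i + 1) →* G i)
    {i : ℕ} (h : i ≤ i) : invSeqComp lam h = MonoidHom.id (G i) :=
  Nat.leRecOn_self _

theorem invSeqComp_succ' {G : ℕ → Type u} [∀ i, Group (G i)] (lam : ∀ i, G (i + 1) →* G i)
    {i j : ℕ} (h1 : i ≤ j) (h2 : i ≤ j + 1) :
    invSeqComp lam h2 = (invSeqComp lam h1).comp (lam j) :=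
  Nat.leRecOn_succ h1 _

variable {G : ℕ → Type u} [∀ i, Group (G i)] {φ : ∀ i, MulAut (G i)}

theorem barComp_inl (lam : ∀ i, G (i + 1) →* G i)
    (lamBar : ∀ i, ZSemidirect (G (i + 1)) (φ (i + 1)) →* ZSemidirect (G i) (φ i))
    (hBarOf : ∀ i (g : G (i + 1)),
      lamBar i (SemidirectProduct.inl g) = SemidirectProduct.inl (lam i g))
    {i j : ℕ} (h : i ≤ j) (g : G j) :
    invSeqComp (G := fun i => ZSemidirect (G i) (φ i)) lamBar h (SemidirectProduct.inl g) =
      SemidirectProduct.inl (invSeqComp lam h g) := by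
  induction j, h using Nat.le_induction with
  | base => rw [invSeqComp_self', invSeqComp_self']; rfl
  | succ j hij ih =>
      rw [invSeqComp_succ' _ hij, invSeqComp_succ' _ hij]
      simp only [MonoidHom.comp_apply, hBarOf, ih]

theorem barComp_t
    (lamBar : ∀ i, ZSemidirect (G (i + 1)) (φ (i + 1)) →* ZSemidirect (G i) (φ i))
    (hBarT : ∀ i, lamBar i (ZSemidirect.t (G (i + 1)) (φ (i + 1))) = ZSemidirect.t (G i) (φ i))
    {i j : ℕ} (h : i ≤ j) :
    invSeqComp (G := fun i => ZSemidirect (G i) (φ i)) lamBar h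
      (ZSemidirect.t (G j) (φ j)) = ZSemidirect.t (G i) (φ i) := by
  induction j, h using Nat.le_induction with
  | base => rw [invSeqComp_self']; rfl
  | succ j hij ih =>
      rw [invSeqComp_succ' _ hij]
      simp only [MonoidHom.comp_apply, hBarT, ih]

theorem barComp_inr
    (lamBar : ∀ i, ZSemidirect (G (i + 1)) (φ (i + 1)) →* ZSemidirect (G i) (φ i))
    (hBarT : ∀ i, lamBar i (ZSemidirect.t (G (i + 1)) (φ (i + 1))) = ZSemidirect.t (G i) (φ i))
    {i j : ℕ} (h : i ≤ j) (z : Multiplicative ℤ) :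
    invSeqComp (G := fun i => ZSemidirect (G i) (φ i)) lamBar h (SemidirectProduct.inr z) =
      SemidirectProduct.inr z := by
  have hz : (SemidirectProduct.inr z : ZSemidirect (G j) (φ j)) =
      (ZSemidirect.t (G j) (φ j)) ^ (Multiplicative.toAdd z) := by
    rw [ZSemidirect.t, ← map_zpow]
    congr 1
    rw [← ofAdd_zsmul, smul_eq_mul, mul_one, ofAdd_toAdd]
  have hz' : (SemidirectProduct.inr z : ZSemidirect (G i) (φ i)) =
      (ZSemidirect.t (G i) (φ i)) ^ (Multiplicative.toAdd z) := by
    rw [ZSemidirect.t, ← map_zpow]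
    congr 1
    rw [← ofAdd_zsmul, smul_eq_mul, mul_one, ofAdd_toAdd]
  rw [hz, map_zpow, barComp_t lamBar hBarT, hz']

theorem mem_barComp_range (lam : ∀ i, G (i + 1) →* G i)
    (lamBar : ∀ i, ZSemidirect (G (i + 1)) (φ (i + 1)) →* ZSemidirect (G i) (φ i))
    (hBarOf : ∀ i (g : G (i + 1)),
      lamBar i (SemidirectProduct.inl g) = SemidirectProduct.inl (lam i g))
    (hBarT : ∀ i, lamBar i (ZSemidirect.t (G (i + 1)) (φ (i + 1))) = ZSemidirect.t (G i) (φ i))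
    {i j : ℕ} (h : i ≤ j) (x : ZSemidirect (G i) (φ i)) :
    x ∈ (invSeqComp (G := fun i => ZSemidirect (G i) (φ i)) lamBar h).range ↔
      x.left ∈ (invSeqComp lam h).range := by
  constructor
  · rintro ⟨y, rfl⟩
    rw [← SemidirectProduct.inl_left_mul_inr_right y, map_mul,
      barComp_inl lam lamBar hBarOf, barComp_inr lamBar hBarT]
    simp only [SemidirectProduct.mul_left, SemidirectProduct.left_inl,
      SemidirectProduct.left_inr, mul_one]
    exact ⟨y.left, by simp⟩
  · rintro ⟨g, hg⟩
    refine ⟨SemidirectProduct.inl g * SemidirectProduct.inr x.right, ?_⟩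
    rw [map_mul, barComp_inl lam lamBar hBarOf, barComp_inr lamBar hBarT, hg]
    exact SemidirectProduct.inl_left_mul_inr_right x

/-- Given an inverse sequence of groups `{G_i, λ_i}` and automorphisms
`φ_i ∈ Aut(G_i)` with `φ_{i} ∘ λ_{i+1} = λ_{i+1} ∘ φ_{i+1}`, the induced semidirect product
sequence `{G_i ⋊_{φ_i} ⟨t_i⟩, λ̄_i}` is semistable iff the base sequence is. -/
theorem induced_semidirect_sequence_semistable_iff
    {G : ℕ → Type u} [∀ i, Group (G i)] (lam : ∀ i, G (i + 1) →* G i)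
    (φ : ∀ i, MulAut (G i))
    (hcomp : ∀ i (g : G (i + 1)), φ i (lam i g) = lam i (φ (i + 1) g))
    (lamBar : ∀ i, ZSemidirect (G (i + 1)) (φ (i + 1)) →* ZSemidirect (G i) (φ i))
    (hBarOf : ∀ i (g : G (i + 1)),
      lamBar i (SemidirectProduct.inl g) = SemidirectProduct.inl (lam i g))
    (hBarT : ∀ i, lamBar i (ZSemidirect.t (G (i + 1)) (φ (i + 1))) = ZSemidirect.t (G i) (φ i)) :
    Semistable (G := fun i => ZSemidirect (G i) (φ i)) lamBar ↔ Semistable lam := by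
  constructor
  · intro H i
    obtain ⟨j, hij, hj⟩ := H i
    refine ⟨j, hij, fun k hjk => ?_⟩
    ext g
    have h1 := mem_barComp_range lam lamBar hBarOf hBarT (hij.trans hjk)
      (SemidirectProduct.inl g)
    have h2 := mem_barComp_range lam lamBar hBarOf hBarT hij
      (SemidirectProduct.inl g)
    rw [SemidirectProduct.left_inl] at h1 h2
    rw [← h1, ← h2, hj k hjk]
  · intro H i
    obtain ⟨j, hij, hj⟩ := H i
    refine ⟨j, hij, fun k hjk => ?_⟩
    ext x
    rw [mem_barComp_range lam lamBar hBarOf hBarT,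
      mem_barComp_range lam lamBar hBarOf hBarT, hj k hjk]
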